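/- arXiv:2209.05372 — 2 statements merged into one kernel-verified Lean document; each statement's English description precedes it below -/
import Mathlib

section
/- (Robbins–Siegmund almost-supermartingale lemma) Let {z_t}, {δ_t}, {γ_t}, {ψ_t} be nonnegative, integrable stochastic processes on a probability space (Ω, Σ, P), adapted to a filtration {F_t}, satisfying E(z_{t+1} | F_t) ≤ (1 + δ_t) z_t + γ_t − ψ_t almost surely for all t. Let Ω₀ := {ω ∈ Ω : Σ_{t=0}^∞ δ_t(ω) < ∞ and Σ_{t=0}^∞ γ_t(ω) < ∞}. Then for almost every ω ∈ Ω₀, the limit lim_{t→∞} z_t(ω) exists (and is finite), and Σ_{t=0}^∞ ψ_t(ω) < ∞. In particular, if P(Ω₀) = 1, then {z_t} is bounded almost surely. -/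
/-!
Dividing by the compounding factor `P t = ∏_{s<t} (1 + δ s)` and compensating by the accumulated
`ψ` and `γ` turns the almost-supermartingale `z` into a genuine supermartingale
`Y t = z t / P t + ∑_{s<t} (ψ s - γ s) / P (s + 1)`, which is bounded below by `-∑_{s<t} γ s`.
Killing `Y + K` from the first time the partial sums of `γ` exceed `K` (a predictable event) leaves
a nonnegative supermartingale, which converges a.s.; where `∑ γ < ∞` some level `K` is never
exceeded, so `Y` converges there. Where moreover `∑ δ < ∞`, `P` increases to a finite limit, so `z`
converges, and the upper bound on `Y` bounds `∑ ψ s / P (s + 1)`, hence `∑ ψ` since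
`P ≤ exp (∑ δ)`.
-/

open MeasureTheory Filter Finset Topology

noncomputable def compoundFactor (d : ℕ → ℝ) (t : ℕ) : ℝ := ∏ s ∈ range t, (1 + d s)

noncomputable def robbinsSiegmundTransform (d g p z : ℕ → ℝ) (t : ℕ) : ℝ :=
  z t / compoundFactor d t + ∑ s ∈ range t, (p s - g s) / compoundFactor d (s + 1)

section Deterministic

variable {d : ℕ → ℝ}

lemma compoundFactor_succ (d : ℕ → ℝ) (t : ℕ) :
    compoundFactor d (t + 1) = compoundFactor d t * (1 + d t) :=
  prod_range_succ _ _

lemma one_le_compoundFactor (hd : ∀ s, 0 ≤ d s) (t : ℕ) : 1 ≤ compoundFactor d t :=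
  one_le_prod fun s _ => le_add_of_nonneg_right (hd s)

lemma compoundFactor_pos (hd : ∀ s, 0 ≤ d s) (t : ℕ) : 0 < compoundFactor d t :=
  one_pos.trans_le (one_le_compoundFactor hd t)

lemma compoundFactor_le_exp_tsum (hd : ∀ s, 0 ≤ d s) (hsd : Summable d) (t : ℕ) :
    compoundFactor d t ≤ Real.exp (∑' s, d s) :=
  calc compoundFactor d t ≤ ∏ s ∈ range t, Real.exp (d s) :=
        prod_le_prod (fun s _ => by linarith [hd s]) fun s _ => by
          linarith [Real.add_one_le_exp (d s)]
    _ = Real.exp (∑ s ∈ range t, d s) := (Real.exp_sum _ _).symm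
    _ ≤ Real.exp (∑' s, d s) := Real.exp_le_exp.2 (hsd.sum_le_tsum _ fun s _ => hd s)

lemma monotone_compoundFactor (hd : ∀ s, 0 ≤ d s) : Monotone (compoundFactor d) :=
  monotone_nat_of_le_succ fun t => by
    rw [compoundFactor_succ]
    exact le_mul_of_one_le_right (compoundFactor_pos hd t).le (le_add_of_nonneg_right (hd t))

lemma exists_tendsto_compoundFactor (hd : ∀ s, 0 ≤ d s) (hsd : Summable d) :
    ∃ P, Tendsto (compoundFactor d) atTop (𝓝 P) :=
  ⟨_, tendsto_atTop_ciSup (monotone_compoundFactor hd)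
    ⟨_, Set.forall_mem_range.2 (compoundFactor_le_exp_tsum hd hsd)⟩⟩

lemma summable_div_compoundFactor (hd : ∀ s, 0 ≤ d s) {g : ℕ → ℝ} (hg : ∀ s, 0 ≤ g s)
    (hsg : Summable g) : Summable fun s => g s / compoundFactor d (s + 1) :=
  hsg.of_nonneg_of_le (fun s => div_nonneg (hg s) (compoundFactor_pos hd _).le)
    fun s => div_le_self (hg s) (one_le_compoundFactor hd _)

lemma summable_of_summable_div_compoundFactor (hd : ∀ s, 0 ≤ d s) (hsd : Summable d)
    {p : ℕ → ℝ} (hp : ∀ s, 0 ≤ p s) (hsp : Summable fun s => p s / compoundFactor d (s + 1)) :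
    Summable p := by
  refine (hsp.mul_right (Real.exp (∑' s, d s))).of_nonneg_of_le hp fun s => ?_
  have hP := compoundFactor_pos hd (s + 1)
  calc p s = p s / compoundFactor d (s + 1) * compoundFactor d (s + 1) :=
        (div_mul_cancel₀ _ hP.ne').symm
    _ ≤ p s / compoundFactor d (s + 1) * Real.exp (∑' s, d s) :=
        mul_le_mul_of_nonneg_left (compoundFactor_le_exp_tsum hd hsd _)
          (div_nonneg (hp s) hP.le)

variable {g p z : ℕ → ℝ}

lemma div_add_sum_le_robbinsSiegmundTransform (hd : ∀ s, 0 ≤ d s) {t : ℕ} {x : ℝ}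
    (hx : x ≤ (1 + d t) * z t + g t - p t) :
    x / compoundFactor d (t + 1) + ∑ s ∈ range (t + 1), (p s - g s) / compoundFactor d (s + 1)
      ≤ robbinsSiegmundTransform d g p z t := by
  have hP := compoundFactor_pos hd t
  have hd1 : 0 < 1 + d t := by linarith [hd t]
  have key : (x + (p t - g t)) / compoundFactor d (t + 1) ≤ z t / compoundFactor d t :=
    calc (x + (p t - g t)) / compoundFactor d (t + 1)
        ≤ ((1 + d t) * z t) / compoundFactor d (t + 1) :=
          div_le_div_of_nonneg_right (by linarith) (compoundFactor_pos hd _).le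
      _ = z t / compoundFactor d t := by
          rw [compoundFactor_succ]; field_simp
  rw [add_div] at key
  rw [sum_range_succ, robbinsSiegmundTransform]
  linarith

lemma neg_sum_le_robbinsSiegmundTransform (hd : ∀ s, 0 ≤ d s) (hg : ∀ s, 0 ≤ g s)
    (hp : ∀ s, 0 ≤ p s) (hz : ∀ s, 0 ≤ z s) (t : ℕ) :
    -∑ s ∈ range t, g s ≤ robbinsSiegmundTransform d g p z t := by
  have hsum : -∑ s ∈ range t, g s ≤ ∑ s ∈ range t, (p s - g s) / compoundFactor d (s + 1) := by
    rw [← sum_neg_distrib]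
    refine sum_le_sum fun s _ => ?_
    rw [le_div_iff₀ (compoundFactor_pos hd _)]
    nlinarith [hp s, hg s, one_le_compoundFactor hd (s + 1)]
  have hzP : 0 ≤ z t / compoundFactor d t := div_nonneg (hz t) (compoundFactor_pos hd t).le
  rw [robbinsSiegmundTransform]
  linarith

lemma summable_of_bddAbove_robbinsSiegmundTransform (hd : ∀ s, 0 ≤ d s) (hg : ∀ s, 0 ≤ g s)
    (hp : ∀ s, 0 ≤ p s) (hz : ∀ s, 0 ≤ z s) (hsd : Summable d) (hsg : Summable g)
    (hY : BddAbove (Set.range (robbinsSiegmundTransform d g p z))) : Summable p := by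
  obtain ⟨c, hc⟩ := hY
  have hsg' := summable_div_compoundFactor hd hg hsg
  refine summable_of_summable_div_compoundFactor hd hsd hp <|
    summable_of_sum_range_le (c := c + ∑' s, g s / compoundFactor d (s + 1))
      (fun s => div_nonneg (hp s) (compoundFactor_pos hd _).le) fun t => ?_
  have hYt : robbinsSiegmundTransform d g p z t ≤ c := hc ⟨t, rfl⟩
  have hgt := hsg'.sum_le_tsum (range t) fun s _ => div_nonneg (hg s) (compoundFactor_pos hd _).le
  have hzP : 0 ≤ z t / compoundFactor d t := div_nonneg (hz t) (compoundFactor_pos hd t).le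
  simp only [robbinsSiegmundTransform, sub_div, sum_sub_distrib] at hYt
  linarith

theorem tendsto_and_summable_of_tendsto_robbinsSiegmundTransform (hd : ∀ s, 0 ≤ d s)
    (hg : ∀ s, 0 ≤ g s) (hp : ∀ s, 0 ≤ p s) (hz : ∀ s, 0 ≤ z s) (hsd : Summable d)
    (hsg : Summable g) {l : ℝ} (hY : Tendsto (robbinsSiegmundTransform d g p z) atTop (𝓝 l)) :
    (∃ m, Tendsto z atTop (𝓝 m)) ∧ Summable p := by
  have hsp := summable_of_bddAbove_robbinsSiegmundTransform hd hg hp hz hsd hsg hY.bddAbove_range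
  have hS : Summable fun s => (p s - g s) / compoundFactor d (s + 1) := by
    simpa only [sub_div] using (summable_div_compoundFactor hd hp hsp).sub
      (summable_div_compoundFactor hd hg hsg)
  obtain ⟨P, hP⟩ := exists_tendsto_compoundFactor hd hsd
  refine ⟨⟨_, ((hY.sub hS.hasSum.tendsto_sum_nat).mul hP).congr fun t => ?_⟩, hsp⟩
  rw [robbinsSiegmundTransform, add_sub_cancel_right,
    div_mul_cancel₀ _ (compoundFactor_pos hd t).ne']

end Deterministic

section Stochastic

variable {Ω : Type*} {mΩ : MeasurableSpace Ω} {μ : Measure Ω} {F : Filtration ℕ mΩ}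

lemma stronglyMeasurable_sum_range_of_le {f : ℕ → Ω → ℝ} (hf : StronglyAdapted F f) {t u : ℕ}
    (htu : t ≤ u + 1) : StronglyMeasurable[F u] fun ω => ∑ s ∈ range t, f s ω :=
  Finset.stronglyMeasurable_fun_sum _ fun s hs =>
    (hf s).mono (F.mono (by have := mem_range.1 hs; omega))

lemma stronglyMeasurable_compoundFactor {δ : ℕ → Ω → ℝ} (hδ : StronglyAdapted F δ) {t u : ℕ}
    (htu : t ≤ u + 1) : StronglyMeasurable[F u] fun ω => compoundFactor (fun s => δ s ω) t :=
  Finset.stronglyMeasurable_fun_prod _ fun s hs =>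
    (stronglyMeasurable_const.add (hδ s)).mono (F.mono (by have := mem_range.1 hs; omega))

lemma stronglyAdapted_div_compoundFactor_succ {f δ : ℕ → Ω → ℝ} (hf : StronglyAdapted F f)
    (hδ : StronglyAdapted F δ) :
    StronglyAdapted F fun s ω => f s ω / compoundFactor (fun s => δ s ω) (s + 1) :=
  fun s => (hf s).div (stronglyMeasurable_compoundFactor hδ le_rfl)

lemma MeasureTheory.Integrable.div_compoundFactor {f : Ω → ℝ} (hf : Integrable f μ) {δ : ℕ → Ω → ℝ}
    (hδ : StronglyAdapted F δ) (hδ_nonneg : ∀ t ω, 0 ≤ δ t ω) (t : ℕ) :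
    Integrable (fun ω => f ω / compoundFactor (fun s => δ s ω) t) μ := by
  refine hf.mono (hf.1.div₀ ((stronglyMeasurable_compoundFactor hδ
    (Nat.le_succ t)).mono (F.le t)).aestronglyMeasurable) (ae_of_all _ fun ω => ?_)
  have hP := one_le_compoundFactor (fun s => hδ_nonneg s ω) t
  rw [norm_div, Real.norm_of_nonneg (zero_le_one.trans hP)]
  exact div_le_self (norm_nonneg _) hP

theorem MeasureTheory.Supermartingale.exists_ae_tendsto_of_nonneg [IsFiniteMeasure μ]
    {f : ℕ → Ω → ℝ} (hf : Supermartingale f F μ) (hf_nonneg : ∀ t, 0 ≤ᵐ[μ] f t) :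
    ∀ᵐ ω ∂μ, ∃ c, Tendsto (fun t => f t ω) atTop (𝓝 c) := by
  have hbdd : ∀ t, eLpNorm (-f t) 1 μ ≤ (eLpNorm (f 0) 1 μ).toNNReal := by
    intro t
    have hnorm : ∀ s, eLpNorm (f s) 1 μ = ENNReal.ofReal (∫ ω, f s ω ∂μ) := fun s => by
      rw [eLpNorm_one_eq_lintegral_enorm,
        ← ofReal_integral_norm_eq_lintegral_enorm (hf.integrable s)]
      exact congrArg ENNReal.ofReal <| integral_congr_ae <| (hf_nonneg s).mono fun ω hω =>
        Real.norm_of_nonneg hω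
    rw [eLpNorm_neg, ENNReal.coe_toNNReal
      (memLp_one_iff_integrable.2 (hf.integrable 0)).eLpNorm_ne_top, hnorm, hnorm]
    exact ENNReal.ofReal_le_ofReal <| by
      simpa only [setIntegral_univ] using hf.setIntegral_le t.zero_le MeasurableSet.univ
  filter_upwards [hf.neg.exists_ae_tendsto_of_bdd hbdd] with ω ⟨c, hc⟩
  exact ⟨-c, by simpa using hc.neg⟩

theorem MeasureTheory.Supermartingale.indicator_of_antitone [IsFiniteMeasure μ]
    {f : ℕ → Ω → ℝ} (hf : Supermartingale f F μ) {A : ℕ → Set Ω} (hA : Antitone A)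
    (hA_zero : MeasurableSet[F 0] (A 0)) (hA_succ : ∀ t, MeasurableSet[F t] (A (t + 1)))
    (hf_nonneg : ∀ t, ∀ ω ∈ A t, 0 ≤ f t ω) :
    Supermartingale (fun t => (A t).indicator (f t)) F μ := by
  have hA_meas : ∀ t, MeasurableSet[F t] (A t)
    | 0 => hA_zero
    | t + 1 => F.mono t.le_succ _ (hA_succ t)
  refine supermartingale_nat (fun t => (hf.stronglyMeasurable t).indicator (hA_meas t))
    (fun t => (hf.integrable t).indicator (F.le t _ (hA_meas t))) fun t => ?_
  filter_upwards [condExp_indicator (hf.integrable (t + 1)) (hA_succ t),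
    hf.condExp_ae_le t.le_succ] with ω h1 h2
  rw [h1]
  by_cases hω : ω ∈ A (t + 1)
  · rw [Set.indicator_of_mem hω, Set.indicator_of_mem (hA t.le_succ hω)]
    exact h2
  · rw [Set.indicator_of_notMem hω]
    exact Set.indicator_nonneg (hf_nonneg t) ω

theorem MeasureTheory.Supermartingale.exists_ae_tendsto_of_neg_sum_le [IsFiniteMeasure μ]
    {f : ℕ → Ω → ℝ} (hf : Supermartingale f F μ) {g : ℕ → Ω → ℝ} (hg : StronglyAdapted F g)
    (hg_nonneg : ∀ t ω, 0 ≤ g t ω) (hfg : ∀ t ω, -∑ s ∈ range t, g s ω ≤ f t ω) :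
    ∀ᵐ ω ∂μ, Summable (fun t => g t ω) → ∃ c, Tendsto (fun t => f t ω) atTop (𝓝 c) := by
  set A : ℕ → ℕ → Set Ω := fun K t => {ω | ∑ s ∈ range t, g s ω ≤ K}
  have hconv : ∀ K : ℕ, ∀ᵐ ω ∂μ,
      ∃ c, Tendsto (fun t => (A K t).indicator (fun ω => f t ω + K) ω) atTop (𝓝 c) := by
    intro K
    have hA_meas : ∀ {t u}, t ≤ u + 1 → MeasurableSet[F u] (A K t) := fun htu =>
      measurableSet_le (stronglyMeasurable_sum_range_of_le hg htu).measurable measurable_const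
    have hA_anti : Antitone (A K) := fun t u htu ω hω =>
      (sum_le_sum_of_subset_of_nonneg (range_mono htu) fun s _ _ => hg_nonneg s ω).trans hω
    have hfK_nonneg : ∀ t, ∀ ω ∈ A K t, 0 ≤ f t ω + K := fun t ω hω => by
      linarith [hfg t ω, show ∑ s ∈ range t, g s ω ≤ K from hω]
    exact ((hf.add_martingale (martingale_const F μ (K : ℝ))).indicator_of_antitone hA_anti
      (hA_meas (Nat.zero_le _)) (fun t => hA_meas le_rfl) hfK_nonneg).exists_ae_tendsto_of_nonneg
      fun t => ae_of_all _ (Set.indicator_nonneg (hfK_nonneg t))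
  filter_upwards [ae_all_iff.2 hconv] with ω hω hsum
  obtain ⟨K, hK⟩ := exists_nat_ge (∑' s, g s ω)
  have hmem : ∀ t, ω ∈ A K t := fun t =>
    (hsum.sum_le_tsum _ fun s _ => hg_nonneg s ω).trans hK
  obtain ⟨c, hc⟩ := hω K
  refine ⟨c - K, (hc.sub_const (K : ℝ)).congr fun t => ?_⟩
  rw [Set.indicator_of_mem (hmem t), add_sub_cancel_right]

theorem supermartingale_robbinsSiegmundTransform [IsFiniteMeasure μ] {z δ γ ψ : ℕ → Ω → ℝ}
    (hδ_nonneg : ∀ t ω, 0 ≤ δ t ω) (hz : StronglyAdapted F z) (hδ : StronglyAdapted F δ)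
    (hγ : StronglyAdapted F γ) (hψ : StronglyAdapted F ψ) (hz_int : ∀ t, Integrable (z t) μ)
    (hγ_int : ∀ t, Integrable (γ t) μ) (hψ_int : ∀ t, Integrable (ψ t) μ)
    (hineq : ∀ t, ∀ᵐ ω ∂μ, (μ[z (t + 1) | F t]) ω ≤ (1 + δ t ω) * z t ω + γ t ω - ψ t ω) :
    Supermartingale (fun t ω => robbinsSiegmundTransform (fun s => δ s ω) (fun s => γ s ω)
      (fun s => ψ s ω) (fun s => z s ω) t) F μ := by
  set Y : ℕ → Ω → ℝ := fun t ω => robbinsSiegmundTransform (fun s => δ s ω) (fun s => γ s ω)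
    (fun s => ψ s ω) (fun s => z s ω) t
  set P : ℕ → Ω → ℝ := fun t ω => compoundFactor (fun s => δ s ω) t
  set S : ℕ → Ω → ℝ := fun t ω => ∑ s ∈ range t, (ψ s ω - γ s ω) / P (s + 1) ω
  have hS : StronglyAdapted F fun s ω => (ψ s ω - γ s ω) / P (s + 1) ω :=
    stronglyAdapted_div_compoundFactor_succ (fun s => (hψ s).sub (hγ s)) hδ
  have hS_int : ∀ t, Integrable (S t) μ := fun t => integrable_finsetSum _ fun s _ =>
    ((hψ_int s).sub (hγ_int s)).div_compoundFactor hδ hδ_nonneg (s + 1)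
  refine supermartingale_nat
    (fun t => ((hz t).div (stronglyMeasurable_compoundFactor hδ t.le_succ)).add
      (stronglyMeasurable_sum_range_of_le hS t.le_succ))
    (fun t => ((hz_int t).div_compoundFactor hδ hδ_nonneg t).add (hS_int t)) fun t => ?_
  have hPinv : StronglyMeasurable[F t] fun ω => (P (t + 1) ω)⁻¹ :=
    (stronglyMeasurable_compoundFactor hδ le_rfl).measurable.inv.stronglyMeasurable
  have hzP_int : Integrable (z (t + 1) * fun ω => (P (t + 1) ω)⁻¹) μ :=
    (hz_int (t + 1)).div_compoundFactor hδ hδ_nonneg (t + 1)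
  have hY_succ : Y (t + 1) = z (t + 1) * (fun ω => (P (t + 1) ω)⁻¹) + S (t + 1) := rfl
  have hcond :
      μ[Y (t + 1) | F t] =ᵐ[μ] μ[z (t + 1) | F t] * (fun ω => (P (t + 1) ω)⁻¹) + S (t + 1) := by
    filter_upwards [condExp_add hzP_int (hS_int _) (F t),
      condExp_mul_of_stronglyMeasurable_right hPinv hzP_int (hz_int _)] with ω h1 h2
    rw [hY_succ, h1, Pi.add_apply, h2, condExp_of_stronglyMeasurable (F.le t)
      (stronglyMeasurable_sum_range_of_le hS le_rfl) (hS_int _)]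
    rfl
  filter_upwards [hcond, hineq t] with ω h1 h2
  exact h1.trans_le (div_add_sum_le_robbinsSiegmundTransform (fun s => hδ_nonneg s ω) h2)

end Stochastic

theorem robbins_siegmund_general
    {Ω : Type*} {mΩ : MeasurableSpace Ω} (μ : Measure Ω) [IsProbabilityMeasure μ]
    (F : Filtration ℕ mΩ)
    (z δ γ ψ : ℕ → Ω → ℝ)
    (hz_nonneg : ∀ t ω, 0 ≤ z t ω)
    (hδ_nonneg : ∀ t ω, 0 ≤ δ t ω)
    (hγ_nonneg : ∀ t ω, 0 ≤ γ t ω)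
    (hψ_nonneg : ∀ t ω, 0 ≤ ψ t ω)
    (hz_adapt : ∀ t, StronglyMeasurable[F t] (z t))
    (hδ_adapt : ∀ t, StronglyMeasurable[F t] (δ t))
    (hγ_adapt : ∀ t, StronglyMeasurable[F t] (γ t))
    (hψ_adapt : ∀ t, StronglyMeasurable[F t] (ψ t))
    (hz_int : ∀ t, Integrable (z t) μ)
    (hγ_int : ∀ t, Integrable (γ t) μ)
    (hψ_int : ∀ t, Integrable (ψ t) μ)
    (hineq : ∀ t, ∀ᵐ ω ∂μ,
      (μ[z (t + 1) | F t]) ω ≤ (1 + δ t ω) * z t ω + γ t ω - ψ t ω) :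
    (∀ᵐ ω ∂μ,
      (Summable (fun t => δ t ω) ∧ Summable (fun t => γ t ω)) →
        (∃ l : ℝ, Filter.Tendsto (fun t => z t ω) Filter.atTop (nhds l)) ∧
          Summable (fun t => ψ t ω)) ∧
    ((∀ᵐ ω ∂μ, Summable (fun t => δ t ω) ∧ Summable (fun t => γ t ω)) →
      ∀ᵐ ω ∂μ, Bornology.IsBounded (Set.range fun t => z t ω)) := by
  have hY := supermartingale_robbinsSiegmundTransform hδ_nonneg hz_adapt hδ_adapt hγ_adapt
    hψ_adapt hz_int hγ_int hψ_int hineq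
  have hY_conv := hY.exists_ae_tendsto_of_neg_sum_le hγ_adapt hγ_nonneg fun t ω =>
    neg_sum_le_robbinsSiegmundTransform (hδ_nonneg · ω) (hγ_nonneg · ω) (hψ_nonneg · ω)
      (hz_nonneg · ω) t
  have h_main : ∀ᵐ ω ∂μ, (Summable (fun t => δ t ω) ∧ Summable (fun t => γ t ω)) →
      (∃ l : ℝ, Tendsto (fun t => z t ω) atTop (𝓝 l)) ∧ Summable (fun t => ψ t ω) := by
    filter_upwards [hY_conv] with ω hω ⟨hδ_sum, hγ_sum⟩
    obtain ⟨l, hl⟩ := hω hγ_sum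
    exact tendsto_and_summable_of_tendsto_robbinsSiegmundTransform (hδ_nonneg · ω)
      (hγ_nonneg · ω) (hψ_nonneg · ω) (hz_nonneg · ω) hδ_sum hγ_sum hl
  refine ⟨h_main, fun h_sum => ?_⟩
  filter_upwards [h_main, h_sum] with ω hω hω_sum
  obtain ⟨⟨l, hl⟩, -⟩ := hω hω_sum
  exact hl.cauchySeq.isBounded_range

/-- Robbins–Siegmund almost-supermartingale lemma. -/
theorem robbins_siegmund
    {Ω : Type*} {mΩ : MeasurableSpace Ω} (μ : Measure Ω) [IsProbabilityMeasure μ]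
    (F : Filtration ℕ mΩ)
    (z δ γ ψ : ℕ → Ω → ℝ)
    (hz_nonneg : ∀ t ω, 0 ≤ z t ω)
    (hδ_nonneg : ∀ t ω, 0 ≤ δ t ω)
    (hγ_nonneg : ∀ t ω, 0 ≤ γ t ω)
    (hψ_nonneg : ∀ t ω, 0 ≤ ψ t ω)
    (hz_adapt : ∀ t, StronglyMeasurable[F t] (z t))
    (hδ_adapt : ∀ t, StronglyMeasurable[F t] (δ t))
    (hγ_adapt : ∀ t, StronglyMeasurable[F t] (γ t))
    (hψ_adapt : ∀ t, StronglyMeasurable[F t] (ψ t))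
    (hz_int : ∀ t, Integrable (z t) μ)
    (hδ_int : ∀ t, Integrable (δ t) μ)
    (hγ_int : ∀ t, Integrable (γ t) μ)
    (hψ_int : ∀ t, Integrable (ψ t) μ)
    (hineq : ∀ t, ∀ᵐ ω ∂μ,
      (μ[z (t + 1) | F t]) ω ≤ (1 + δ t ω) * z t ω + γ t ω - ψ t ω) :
    (∀ᵐ ω ∂μ,
      (Summable (fun t => δ t ω) ∧ Summable (fun t => γ t ω)) →
        (∃ l : ℝ, Filter.Tendsto (fun t => z t ω) Filter.atTop (nhds l)) ∧
          Summable (fun t => ψ t ω)) ∧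
    ((∀ᵐ ω ∂μ, Summable (fun t => δ t ω) ∧ Summable (fun t => γ t ω)) →
      ∀ᵐ ω ∂μ, Bornology.IsBounded (Set.range fun t => z t ω)) :=
  robbins_siegmund_general μ F z δ γ ψ hz_nonneg hδ_nonneg hγ_nonneg hψ_nonneg hz_adapt hδ_adapt
    hγ_adapt hψ_adapt hz_int hγ_int hψ_int hineq
end

section
/- Let g ∈ ℝ^d be a fixed vector, let N ≥ 1, and let κ_1, …, κ_N be independent random indices, each uniformly distributed on {1, …, d}. Define the random vector φ := (d/N) Σ_{n=1}^N e_{κ_n} ∘ g. Then E(φ) = g and E(‖φ − g‖²) = ((d − 1)/N) ‖g‖²; in particular E(‖φ − g‖²) ≤ (d − 1) ‖g‖². -/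
/-!
Write `φ = ∑ₙ F(κₙ)` with `F j = (d/N) • e_j g_j`: a sum of `N` independent samples of `F` at a
uniform index. Its mean is `N · (1/d) ∑_j F j = g`. Coordinatewise, the variance of a sum of
pairwise independent terms is the sum of their variances, so
`E‖φ - g‖² = N (E‖F(κ)‖² - ‖E F(κ)‖²) = N (d/N² - 1/N²) ‖g‖²`.
-/

open MeasureTheory ProbabilityTheory
open scoped ENNReal

lemma EuclideanSpace.integral_norm_sub_integral_sq {Ω ι : Type*} {mΩ : MeasurableSpace Ω}
    {μ : Measure Ω} [IsFiniteMeasure μ] [Fintype ι] {X : Ω → EuclideanSpace ℝ ι}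
    (hX : MemLp X 2 μ) :
    ∫ ω, ‖X ω - ∫ ω', X ω' ∂μ‖ ^ 2 ∂μ = ∑ i, Var[fun ω ↦ X ω i; μ] := by
  have hcoord (i : ι) : MemLp (fun ω ↦ X ω i) 2 μ :=
    (EuclideanSpace.proj (𝕜 := ℝ) i).comp_memLp' hX
  have hmean (i : ι) : (∫ ω, X ω ∂μ) i = ∫ ω, X ω i ∂μ :=
    ((EuclideanSpace.proj i).integral_comp_comm (hX.integrable one_le_two)).symm
  calc ∫ ω, ‖X ω - ∫ ω', X ω' ∂μ‖ ^ 2 ∂μ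
      = ∫ ω, ∑ i, (X ω i - ∫ ω', X ω' i ∂μ) ^ 2 ∂μ := by
        simp_rw [EuclideanSpace.real_norm_sq_eq, PiLp.sub_apply, hmean]
    _ = ∑ i, ∫ ω, (X ω i - ∫ ω', X ω' i ∂μ) ^ 2 ∂μ :=
        integral_finsetSum _ fun i _ ↦ ((hcoord i).sub (memLp_const _)).integrable_sq
    _ = ∑ i, Var[fun ω ↦ X ω i; μ] := by
        simp_rw [variance_eq_integral (hcoord _).aemeasurable]

section UniformSampling

variable {Ω ι E : Type*} {mΩ : MeasurableSpace Ω} {μ : Measure Ω}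
  [Fintype ι] [MeasurableSpace ι] [DiscreteMeasurableSpace ι]
  [NormedAddCommGroup E] [NormedSpace ℝ E] [CompleteSpace E]

lemma integral_comp_eq_sum_measureReal [IsFiniteMeasure μ] {κ : Ω → ι} (hκ : Measurable κ)
    (f : ι → E) : ∫ ω, f (κ ω) ∂μ = ∑ i, μ.real {ω | κ ω = i} • f i := by
  rw [← integral_map hκ.aemeasurable .of_discrete, integral_fintype .of_finite]
  simp [map_measureReal_apply hκ (measurableSet_singleton _), Set.preimage]

lemma integral_comp_of_uniform [IsFiniteMeasure μ] {κ : Ω → ι} (hκ : Measurable κ)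
    (hunif : ∀ i, μ {ω | κ ω = i} = (Fintype.card ι : ℝ≥0∞)⁻¹) (f : ι → E) :
    ∫ ω, f (κ ω) ∂μ = (Fintype.card ι : ℝ)⁻¹ • ∑ i, f i := by
  simp [integral_comp_eq_sum_measureReal hκ, measureReal_def, hunif, Finset.smul_sum]

variable {J : Type*} [Fintype J]

lemma integral_sum_comp_of_uniform [IsFiniteMeasure μ] {κ : J → Ω → ι}
    (hκ : ∀ n, Measurable (κ n)) (hunif : ∀ n i, μ {ω | κ n ω = i} = (Fintype.card ι : ℝ≥0∞)⁻¹)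
    (F : ι → E) :
    ∫ ω, ∑ n, F (κ n ω) ∂μ = (Fintype.card J : ℝ) • (Fintype.card ι : ℝ)⁻¹ • ∑ i, F i := by
  rw [integral_finsetSum (f := fun n ω ↦ F (κ n ω)) _
    fun n _ ↦ Integrable.of_finite.comp_measurable (hκ n)]
  simp [integral_comp_of_uniform (hκ _) (hunif _), ← Nat.cast_smul_eq_nsmul ℝ]

lemma variance_comp_of_uniform [IsProbabilityMeasure μ] {κ : Ω → ι} (hκ : Measurable κ)
    (hunif : ∀ i, μ {ω | κ ω = i} = (Fintype.card ι : ℝ≥0∞)⁻¹) (f : ι → ℝ) :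
    Var[fun ω ↦ f (κ ω); μ] =
      (Fintype.card ι : ℝ)⁻¹ * ∑ i, f i ^ 2 - ((Fintype.card ι : ℝ)⁻¹ * ∑ i, f i) ^ 2 := by
  rw [variance_eq_sub (X := fun ω ↦ f (κ ω)) (MemLp.of_discrete.comp_of_map hκ.aemeasurable)]
  simp only [Pi.pow_apply]
  rw [integral_comp_of_uniform hκ hunif (f · ^ 2), integral_comp_of_uniform hκ hunif f]
  rfl

lemma variance_sum_comp_of_uniform [IsProbabilityMeasure μ] {κ : J → Ω → ι}
    (hκ : ∀ n, Measurable (κ n)) (hunif : ∀ n i, μ {ω | κ n ω = i} = (Fintype.card ι : ℝ≥0∞)⁻¹)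
    (hindep : Pairwise fun m n ↦ κ m ⟂ᵢ[μ] κ n) (f : ι → ℝ) :
    Var[fun ω ↦ ∑ n, f (κ n ω); μ] = Fintype.card J *
      ((Fintype.card ι : ℝ)⁻¹ * ∑ i, f i ^ 2 - ((Fintype.card ι : ℝ)⁻¹ * ∑ i, f i) ^ 2) := by
  rw [← Finset.sum_fn, IndepFun.variance_sum (X := fun n ω ↦ f (κ n ω))
    (fun n _ ↦ MemLp.of_discrete.comp_of_map (hκ n).aemeasurable)
    fun m _ n _ hmn ↦ (hindep hmn).comp (measurable_of_finite f) (measurable_of_finite f)]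
  simp only [variance_comp_of_uniform (hκ _) (hunif _) f, Finset.sum_const, Finset.card_univ,
    nsmul_eq_mul]

lemma integral_norm_sum_comp_sub_integral_sq_of_uniform {ι' : Type*} [Fintype ι']
    [IsProbabilityMeasure μ] {κ : J → Ω → ι} (hκ : ∀ n, Measurable (κ n))
    (hunif : ∀ n i, μ {ω | κ n ω = i} = (Fintype.card ι : ℝ≥0∞)⁻¹)
    (hindep : Pairwise fun m n ↦ κ m ⟂ᵢ[μ] κ n) (F : ι → EuclideanSpace ℝ ι') :
    ∫ ω, ‖∑ n, F (κ n ω) - ∫ ω', ∑ n, F (κ n ω') ∂μ‖ ^ 2 ∂μ = Fintype.card J *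
      ((Fintype.card ι : ℝ)⁻¹ * ∑ i, ‖F i‖ ^ 2 - ‖(Fintype.card ι : ℝ)⁻¹ • ∑ i, F i‖ ^ 2) := by
  have hmemLp : MemLp (fun ω ↦ ∑ n, F (κ n ω)) 2 μ :=
    memLp_finsetSum (f := fun n ω ↦ F (κ n ω)) _ fun n _ ↦
      MemLp.of_discrete.comp_of_map (hκ n).aemeasurable
  rw [EuclideanSpace.integral_norm_sub_integral_sq hmemLp]
  simp only [WithLp.ofLp_sum, Finset.sum_apply]
  rw [Finset.sum_congr rfl fun j _ ↦ variance_sum_comp_of_uniform hκ hunif hindep (F · j)]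
  simp only [EuclideanSpace.real_norm_sq_eq, PiLp.smul_apply, WithLp.ofLp_sum, Finset.sum_apply,
    smul_eq_mul, Finset.mul_sum, mul_sub, Finset.sum_sub_distrib]
  rw [Finset.sum_comm (γ := ι)]

end UniformSampling

/-- Multiple-coordinate sampling with replacement: if `κ_1, …, κ_N` are i.i.d. uniform
on `{1,…,d}` and `φ = (d/N) Σ_n e_{κ_n} ∘ g`, then `E(φ) = g` and
`E(‖φ − g‖²) = ((d−1)/N) ‖g‖² ≤ (d−1) ‖g‖²`. -/
theorem multi_coordinate_sampling_mean_variance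
    {d N : ℕ} (hd : 1 ≤ d) (hN : 1 ≤ N) (g : EuclideanSpace ℝ (Fin d))
    {Ω : Type*} {mΩ : MeasurableSpace Ω} (μ : Measure Ω) [IsProbabilityMeasure μ]
    (κ : Fin N → Ω → Fin d) (hκ : ∀ n, Measurable (κ n))
    (hunif : ∀ n, ∀ i : Fin d, μ {ω | κ n ω = i} = (d : ENNReal)⁻¹)
    (hindep : iIndepFun κ μ)
    (φ : Ω → EuclideanSpace ℝ (Fin d))
    (hφ : ∀ ω, φ ω = ((d : ℝ) / N) • ∑ n : Fin N, EuclideanSpace.single (κ n ω) (g (κ n ω))) :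
    (∫ ω, φ ω ∂μ) = g ∧
    (∫ ω, ‖φ ω - g‖ ^ 2 ∂μ) = (((d : ℝ) - 1) / N) * ‖g‖ ^ 2 ∧
    (∫ ω, ‖φ ω - g‖ ^ 2 ∂μ) ≤ ((d : ℝ) - 1) * ‖g‖ ^ 2 := by
  have hd0 : (d : ℝ) ≠ 0 := by positivity
  have hN0 : (N : ℝ) ≠ 0 := by positivity
  have hunif' : ∀ n i, μ {ω | κ n ω = i} = (Fintype.card (Fin d) : ℝ≥0∞)⁻¹ := by
    simpa using hunif
  set F : Fin d → EuclideanSpace ℝ (Fin d) :=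
    fun j ↦ ((d : ℝ) / N) • EuclideanSpace.single j (g j)
  have hφF : φ = fun ω ↦ ∑ n, F (κ n ω) := funext fun ω ↦ by simp [hφ, F, Finset.smul_sum]
  have hsumF : ∑ j, F j = ((d : ℝ) / N) • g := by
    rw [← Finset.smul_sum]
    congr
    ext; simp
  have hmean : ∫ ω, φ ω ∂μ = g := by
    rw [hφF, integral_sum_comp_of_uniform hκ hunif' F, hsumF, smul_smul, smul_smul]
    simp only [Fintype.card_fin]
    rw [show (N : ℝ) * (d : ℝ)⁻¹ * (d / N) = 1 by field_simp, one_smul]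
  have hvar : ∫ ω, ‖φ ω - g‖ ^ 2 ∂μ = ((d - 1 : ℝ) / N) * ‖g‖ ^ 2 := by
    have h := integral_norm_sum_comp_sub_integral_sq_of_uniform hκ hunif'
      (fun _ _ hmn ↦ hindep.indepFun hmn) F
    simp only [hφF] at hmean ⊢
    rw [hmean] at h
    have hF (j : Fin d) : ‖F j‖ ^ 2 = ((d : ℝ) / N) ^ 2 * g j ^ 2 := by
      simp [F, norm_smul, mul_pow]
    rw [h, Finset.sum_congr rfl fun j _ ↦ hF j, ← Finset.mul_sum,
      ← EuclideanSpace.real_norm_sq_eq, hsumF, smul_smul, norm_smul]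
    simp only [Fintype.card_fin, Real.norm_eq_abs, mul_pow, sq_abs]
    field_simp
  refine ⟨hmean, hvar, hvar ▸ mul_le_mul_of_nonneg_right ?_ (sq_nonneg _)⟩
  exact div_le_self (by simpa using hd) (by exact_mod_cast hN)
end
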